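/- arXiv:1811.12369 — 8 statements merged into one kernel-verified Lean document; each statement's English description precedes it below -/
import Mathlib

section
/- Let S be a finite set, let ℓ ≥ 1, and let E : B^ℓ → (S → S) be an arbitrary map into the space of functions from S to itself. Then for every x ∈ 𝕋^ℓ and every s ∈ S, the hazard-free extension of the Boolean function y ↦ B_{E(y)} · e_s (a function from B^ℓ to B^{|S|}), evaluated at x, equals (*_{y ∈ res(x)} B_{E(y)}) ·_u e_s. -/
/-- The merge (`*`) of a set of Boolean values: the common value if the set
is a singleton, and `none` (= `u`) otherwise. Intended for nonempty sets. -/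
noncomputable def starSet (S : Set Bool) : Option Bool := by
  classical
  exact if true ∈ S then (if false ∈ S then none else some true)
  else if false ∈ S then some false else none

/-- Resolutions of a partially unstable string: `none` entries may be filled arbitrarily. -/
def res {ι : Type*} (x : ι → Option Bool) : Set (ι → Bool) :=
  {y | ∀ i b, x i = some b → y i = b}

/-- Hazard-free extension of a Boolean function: `f_u(x) = *_{y ∈ res(x)} f(y)`. -/
noncomputable def hfExt {ι κ : Type*} (f : (ι → Bool) → κ → Bool)
    (x : ι → Option Bool) : κ → Option Bool :=
  fun j => starSet {b | ∃ y ∈ res x, f y j = b}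

/-- Boolean matrix-vector multiplication over `(Bool, or, and)`. -/
def bmulVec {α β : Type*} [Fintype β] (A : α → β → Bool) (v : β → Bool) : α → Bool :=
  fun i => decide (∃ j, A i j = true ∧ v j = true)

/-- Resolutions of a Kleene matrix. -/
def resM {α β : Type*} (A : α → β → Option Bool) : Set (α → β → Bool) :=
  {A' | ∀ i j b, A i j = some b → A' i j = b}

/-- The hazard-free extension `·_u` of Boolean matrix-vector multiplication. -/
noncomputable def kmulVec {α β : Type*} [Fintype β]
    (A : α → β → Option Bool) (v : β → Option Bool) : α → Option Bool :=
  fun i => starSet {b | ∃ A' ∈ resM A, ∃ v' ∈ res v, bmulVec A' v' i = b}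

/-- The unit vector `e_s` with a `1` exactly at position `s`. -/
def eVec {S : Type*} [DecidableEq S] (s : S) : S → Bool := fun s' => decide (s' = s)

/-- The Boolean matrix `B_f` of `f : S → S`, whose column `s` is `e_{f(s)}`. -/
def Bmat {S : Type*} [DecidableEq S] (f : S → S) : S → S → Bool :=
  fun s' s'' => decide (f s'' = s')

lemma starSet_singleton' (c : Bool) : starSet {c} = some c := by
  cases c <;> simp [starSet]

lemma starSet_none' {T : Set Bool} (ht : true ∈ T) (hf : false ∈ T) : starSet T = none := by
  simp [starSet, ht, hf]

/-- for any encoding `E : B^ℓ → (S → S)`, the hazard-free extension of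
`y ↦ B_{E(y)} · e_s` at `x` equals `(*_{y ∈ res(x)} B_{E(y)}) ·_u e_s`. -/
theorem hfExt_Bmat_mul_unit (S : Type) [Fintype S] [DecidableEq S]
    (ℓ : ℕ) (hℓ : 1 ≤ ℓ) (E : (Fin ℓ → Bool) → S → S)
    (x : Fin ℓ → Option Bool) (s : S) :
    hfExt (fun y => bmulVec (Bmat (E y)) (eVec s)) x
      = kmulVec (fun a b => starSet {c : Bool | ∃ y ∈ res x, Bmat (E y) a b = c})
          (fun t => some (eVec s t)) := by
  classical
  set A : S → S → Option Bool :=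
    fun a b => starSet {c : Bool | ∃ y ∈ res x, Bmat (E y) a b = c} with hA
  funext s'
  -- bmulVec with unit vector picks out column s
  have hbm : ∀ (A' : S → S → Bool), bmulVec A' (eVec s) s' = A' s' s := by
    intro A'
    unfold bmulVec
    by_cases h : A' s' s = true
    · have : ∃ j, A' s' j = true ∧ eVec s j = true := ⟨s, h, by simp [eVec]⟩
      simp [this, h]
    · have : ¬ ∃ j, A' s' j = true ∧ eVec s j = true := by
        rintro ⟨j, hj, he⟩
        have : j = s := by simpa [eVec] using he
        exact h (this ▸ hj)
      simp [this, Bool.eq_false_iff.mpr h]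
  -- LHS equals A s' s
  have hL : hfExt (fun y => bmulVec (Bmat (E y)) (eVec s)) x s' = A s' s := by
    unfold hfExt
    congr 1
    ext b
    constructor
    · rintro ⟨y, hy, hb⟩; exact ⟨y, hy, (hbm (Bmat (E y))).symm.trans hb⟩
    · rintro ⟨y, hy, hb⟩; exact ⟨y, hy, (hbm (Bmat (E y))).trans hb⟩
  -- RHS set simplification: res of a fully stable vector is a singleton
  have hres_v : ∀ v' ∈ res (fun t => some (eVec s t)), v' = eVec s := by
    intro v' hv'; funext t; exact hv' t _ rfl
  have hev : eVec s ∈ res (fun t => some (eVec s t)) := by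
    intro t b hb; exact Option.some_injective _ hb
  have hR : kmulVec A (fun t => some (eVec s t)) s'
      = starSet {b | ∃ A' ∈ resM A, A' s' s = b} := by
    unfold kmulVec
    congr 1
    ext b
    constructor
    · rintro ⟨A', hA', v', hv', hb⟩
      refine ⟨A', hA', ?_⟩
      rw [hres_v v' hv'] at hb
      rw [← hb, hbm]
    · rintro ⟨A', hA', hb⟩
      exact ⟨A', hA', eVec s, hev, by rw [hbm]; exact hb⟩
  rw [hL, hR]
  -- Now show starSet {b | ∃ A' ∈ resM A, A' s' s = b} = A s' s
  have hmem : ∀ (c : Bool), (fun i j => (A i j).getD c) ∈ resM A := by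
    intro c i j b hb; simp [hb]
  cases hAss : A s' s with
  | some c =>
    have : {b | ∃ A' ∈ resM A, A' s' s = b} = {c} := by
      ext b
      constructor
      · rintro ⟨A', hA', hb⟩
        have := hA' s' s c hAss
        simp [← hb, this]
      · rintro rfl
        refine ⟨fun i j => (A i j).getD false, hmem false, ?_⟩
        simp [hAss]
    rw [this, starSet_singleton']
  | none =>
    have ht : true ∈ {b | ∃ A' ∈ resM A, A' s' s = b} :=
      ⟨fun i j => (A i j).getD true, hmem true, by simp [hAss]⟩
    have hf : false ∈ {b | ∃ A' ∈ resM A, A' s' s = b} :=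
      ⟨fun i j => (A i j).getD false, hmem false, by simp [hAss]⟩
    exact (starSet_none' ht hf).symm
end

section
/- The hazard-free Kleene matrix product is associative: for all α,β,γ,δ ∈ ℕ and all matrices A ∈ 𝕋^{α×β}, B ∈ 𝕋^{β×γ}, C ∈ 𝕋^{γ×δ}, it holds that (A ·_u B) ·_u C = A ·_u (B ·_u C). -/
/-- Boolean matrix multiplication over the semiring `(Bool, or, and)`. -/
def bmul {α β γ : Type*} [Fintype β] (A : α → β → Bool) (B : β → γ → Bool) :
    α → γ → Bool :=
  fun i k => decide (∃ j, A i j = true ∧ B j k = true)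

/-- The hazard-free extension `·_u` of Boolean matrix multiplication. -/
noncomputable def kmul {α β γ : Type*} [Fintype β]
    (A : α → β → Option Bool) (B : β → γ → Option Bool) : α → γ → Option Bool :=
  fun i k => starSet {b | ∃ A' ∈ resM A, ∃ B' ∈ resM B, bmul A' B' i k = b}

open Classical in
/-- Kleene-logic matrix product, described explicitly. -/
noncomputable def kprod {α β γ : Type*} [Fintype β]
    (A : α → β → Option Bool) (B : β → γ → Option Bool) : α → γ → Option Bool :=
  fun i k =>
    if ∃ j, A i j = some true ∧ B j k = some true then some true
    else if ∀ j, A i j = some false ∨ B j k = some false then some false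
    else none

lemma optionBool_ext {x y : Option Bool}
    (h1 : x = some true ↔ y = some true) (h2 : x = some false ↔ y = some false) :
    x = y := by
  rcases x with _ | _ | _ <;> rcases y with _ | _ | _ <;> simp_all

section aux

variable {α β γ : Type*} [Fintype β]
  (A : α → β → Option Bool) (B : β → γ → Option Bool) (i : α) (k : γ)

lemma mem_true_iff :
    (true ∈ {b | ∃ A' ∈ resM A, ∃ B' ∈ resM B, bmul A' B' i k = b}) ↔
      ∃ j, A i j ≠ some false ∧ B j k ≠ some false := by
  constructor
  · rintro ⟨A', hA', B', hB', h⟩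
    simp only [bmul, decide_eq_true_eq] at h
    obtain ⟨j, ha, hb⟩ := h
    refine ⟨j, ?_, ?_⟩
    · intro hc; have := hA' i j false hc; simp [this] at ha
    · intro hc; have := hB' j k false hc; simp [this] at hb
  · rintro ⟨j, ha, hb⟩
    refine ⟨fun i j => if A i j = some false then false else true, ?_,
            fun j k => if B j k = some false then false else true, ?_, ?_⟩
    · intro i j b hb'; cases b <;> simp [hb']
    · intro j k b hb'; cases b <;> simp [hb']
    · simp only [bmul, decide_eq_true_eq]
      exact ⟨j, by simp [ha], by simp [hb]⟩

lemma mem_false_iff :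
    (false ∈ {b | ∃ A' ∈ resM A, ∃ B' ∈ resM B, bmul A' B' i k = b}) ↔
      ∀ j, ¬(A i j = some true ∧ B j k = some true) := by
  constructor
  · rintro ⟨A', hA', B', hB', h⟩ j ⟨ha, hb⟩
    simp only [bmul, decide_eq_false_iff_not] at h
    exact h ⟨j, hA' i j true ha, hB' j k true hb⟩
  · intro h
    refine ⟨fun i j => if A i j = some true then true else false, ?_,
            fun j k => if B j k = some true then true else false, ?_, ?_⟩
    · intro i j b hb'; cases b <;> simp [hb']
    · intro j k b hb'; cases b <;> simp [hb']
    · simp only [bmul, decide_eq_false_iff_not]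
      rintro ⟨j, ha, hb⟩
      apply h j
      constructor
      · by_contra hc; simp [hc] at ha
      · by_contra hc; simp [hc] at hb

lemma kmul_eq_kprod : kmul A B = kprod A B := by
  funext i k
  have ht := mem_true_iff A B i k
  have hf := mem_false_iff A B i k
  simp only [kmul, kprod, starSet]
  by_cases h1 : ∃ j, A i j = some true ∧ B j k = some true
  · obtain ⟨j, ha, hb⟩ := h1
    rw [if_pos (ht.mpr ⟨j, by simp [ha], by simp [hb]⟩),
        if_neg (fun hc => (hf.mp hc) j ⟨ha, hb⟩), if_pos ⟨j, ha, hb⟩]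
  · rw [if_neg h1]
    have hfm : false ∈ {b | ∃ A' ∈ resM A, ∃ B' ∈ resM B, bmul A' B' i k = b} :=
      hf.mpr (fun j hj => h1 ⟨j, hj⟩)
    by_cases h2 : true ∈ {b | ∃ A' ∈ resM A, ∃ B' ∈ resM B, bmul A' B' i k = b}
    · rw [if_pos h2, if_pos hfm, if_neg]
      intro hall
      obtain ⟨j, ha, hb⟩ := ht.mp h2
      rcases hall j with h | h
      · exact ha h
      · exact hb h
    · rw [if_neg h2, if_pos hfm, if_pos]
      intro j
      by_contra hc
      push_neg at hc
      exact h2 (ht.mpr ⟨j, hc.1, hc.2⟩)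

lemma kprod_eq_true_iff :
    kprod A B i k = some true ↔ ∃ j, A i j = some true ∧ B j k = some true := by
  simp only [kprod]
  split_ifs with h1 h2 <;> simp [h1]

lemma kprod_eq_false_iff :
    kprod A B i k = some false ↔ ∀ j, A i j = some false ∨ B j k = some false := by
  simp only [kprod]
  split_ifs with h1 h2
  · refine iff_of_false (by simp) ?_
    obtain ⟨j, ha, hb⟩ := h1
    intro hall
    rcases hall j with h | h <;> simp [h] at ha hb
  · simp [h2]
  · exact iff_of_false (by simp) h2

end aux

lemma kprod_assoc {α β γ δ : Type*} [Fintype β] [Fintype γ]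
    (A : α → β → Option Bool) (B : β → γ → Option Bool)
    (C : γ → δ → Option Bool) :
    kprod (kprod A B) C = kprod A (kprod B C) := by
  funext i l
  apply optionBool_ext
  · simp only [kprod_eq_true_iff]
    constructor
    · rintro ⟨k, ⟨j, ha, hb⟩, hc⟩; exact ⟨j, ha, k, hb, hc⟩
    · rintro ⟨j, ha, k, hb, hc⟩; exact ⟨k, ⟨j, ha, hb⟩, hc⟩
  · simp only [kprod_eq_false_iff]
    constructor
    · intro h j
      by_cases ha : A i j = some false
      · exact Or.inl ha
      · refine Or.inr (fun k => ?_)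
        rcases h k with h' | h'
        · rcases h' j with h'' | h''
          · exact absurd h'' ha
          · exact Or.inl h''
        · exact Or.inr h'
    · intro h k
      by_cases hc : C k l = some false
      · exact Or.inr hc
      · refine Or.inl (fun j => ?_)
        rcases h j with h' | h'
        · exact Or.inl h'
        · rcases h' k with h'' | h''
          · exact Or.inr h''
          · exact absurd h'' hc

/-- the hazard-free Kleene matrix product is associative. -/
theorem kmul_assoc (α β γ δ : ℕ)
    (A : Fin α → Fin β → Option Bool) (B : Fin β → Fin γ → Option Bool)
    (C : Fin γ → Fin δ → Option Bool) :
    kmul (kmul A B) C = kmul A (kmul B C) := by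
  rw [kmul_eq_kprod A B, kmul_eq_kprod B C, kmul_eq_kprod, kmul_eq_kprod,
      kprod_assoc]
end

section
/- The naive monotone formula for matrix multiplication is hazard-free: for all α,β,γ ∈ ℕ, all A ∈ 𝕋^{α×β}, B ∈ 𝕋^{β×γ}, and all indices i ∈ {1,…,α}, j ∈ {1,…,γ}, the entry (A ·_u B)_{ij} equals the Kleene-or over k ∈ {1,…,β} of the Kleene-and of A_{ik} and B_{kj}. -/
/-- Kleene `or`: the hazard-free extension of Boolean `or` to `𝕋 = Option Bool`. -/
def kor : Option Bool → Option Bool → Option Bool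
  | some true, _ => some true
  | _, some true => some true
  | some false, some false => some false
  | _, _ => none

/-- Kleene `and`: the hazard-free extension of Boolean `and` to `𝕋 = Option Bool`. -/
def kand : Option Bool → Option Bool → Option Bool
  | some false, _ => some false
  | _, some false => some false
  | some true, some true => some true
  | _, _ => none


instance : Std.Commutative kor := ⟨by decide⟩
instance : Std.Associative kor := ⟨by decide⟩

lemma starSet_eq_true {S : Set Bool} (ht : true ∈ S) (hf : false ∉ S) :
    starSet S = some true := by simp [starSet, ht, hf]

lemma starSet_eq_false {S : Set Bool} (ht : true ∉ S) (hf : false ∈ S) :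
    starSet S = some false := by simp [starSet, ht, hf]

lemma starSet_eq_none {S : Set Bool} (ht : true ∈ S) (hf : false ∈ S) :
    starSet S = none := by simp [starSet, ht, hf]

lemma kand_eq_true_iff (a b : Option Bool) :
    kand a b = some true ↔ a = some true ∧ b = some true := by revert a b; decide

lemma kand_eq_false_iff (a b : Option Bool) :
    kand a b = some false ↔ a = some false ∨ b = some false := by revert a b; decide

lemma fold_kor_eq {ι : Type*} [DecidableEq ι] (s : Finset ι) (g : ι → Option Bool) :
    s.fold kor (some false) g =
      if ∃ k ∈ s, g k = some true then some true
      else if ∀ k ∈ s, g k = some false then some false else none := by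
  classical
  induction s using Finset.induction_on with
  | empty => simp
  | @insert a s ha ih =>
    rw [Finset.fold_insert ha, ih]
    by_cases h1 : ∃ k ∈ s, g k = some true
    · obtain ⟨k, hk, hgk⟩ := h1
      have e1 : ∃ k ∈ insert a s, g k = some true :=
        ⟨k, Finset.mem_insert_of_mem hk, hgk⟩
      rw [if_pos ⟨k, hk, hgk⟩, if_pos e1]
      rcases hga : g a with _ | (_ | _) <;> simp [kor]
    · rw [if_neg h1]
      by_cases h2 : ∀ k ∈ s, g k = some false
      · rw [if_pos h2]
        rcases hga : g a with _ | (_ | _) <;>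
          simp [Finset.exists_mem_insert, Finset.forall_mem_insert, hga, h1, h2, kor] <;>
          exact h2
      · rw [if_neg h2]
        rcases hga : g a with _ | (_ | _) <;>
          simp [Finset.exists_mem_insert, Finset.forall_mem_insert, hga, h1, h2, kor]

def resolveD {α β : Type*} (A : α → β → Option Bool) (d : Bool) : α → β → Bool :=
  fun a b => (A a b).getD d

lemma resolveD_mem {α β : Type*} (A : α → β → Option Bool) (d : Bool) :
    resolveD A d ∈ resM A := by
  intro i j b h; simp [resolveD, h]

/-- the naive monotone formula for matrix multiplication is hazard-free:
`(A ·_u B)_{ij}` is the Kleene-or over `k` of the Kleene-and of `A_{ik}` and `B_{kj}`. -/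
theorem kmul_eq_kor_kand (α β γ : ℕ)
    (A : Fin α → Fin β → Option Bool) (B : Fin β → Fin γ → Option Bool)
    (i : Fin α) (j : Fin γ) :
    kmul A B i j = Finset.univ.fold kor (some false) (fun k => kand (A i k) (B k j)) := by
  classical
  rw [fold_kor_eq]
  simp only [Finset.mem_univ, true_and, true_implies, kand_eq_true_iff, kand_eq_false_iff]
  by_cases h1 : ∃ k, A i k = some true ∧ B k j = some true
  · rw [if_pos h1]
    obtain ⟨k, hA, hB⟩ := h1
    apply starSet_eq_true
    · exact ⟨resolveD A true, resolveD_mem A true, resolveD B true, resolveD_mem B true,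
        by simp [bmul]; exact ⟨k, by simp [resolveD, hA], by simp [resolveD, hB]⟩⟩
    · rintro ⟨A', hA', B', hB', hb⟩
      simp only [bmul, decide_eq_false_iff_not, not_exists, not_and] at hb
      exact hb k (hA' i k true hA) (hB' k j true hB)
  · rw [if_neg h1]
    by_cases h2 : ∀ k, A i k = some false ∨ B k j = some false
    · rw [if_pos h2]
      apply starSet_eq_false
      · rintro ⟨A', hA', B', hB', hb⟩
        simp only [bmul, decide_eq_true_eq] at hb
        obtain ⟨k, hak, hbk⟩ := hb
        rcases h2 k with h | h
        · rw [hA' i k false h] at hak; exact Bool.noConfusion hak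
        · rw [hB' k j false h] at hbk; exact Bool.noConfusion hbk
      · refine ⟨resolveD A false, resolveD_mem A false, resolveD B false, resolveD_mem B false, ?_⟩
        simp only [bmul, decide_eq_false_iff_not, not_exists, not_and]
        intro k hak hbk
        rcases h2 k with h | h
        · simp [resolveD, h] at hak
        · simp [resolveD, h] at hbk
    · rw [if_neg h2]
      push_neg at h2
      obtain ⟨k0, hk1, hk2⟩ := h2
      apply starSet_eq_none
      · refine ⟨resolveD A true, resolveD_mem A true, resolveD B true, resolveD_mem B true, ?_⟩
        simp only [bmul, decide_eq_true_eq]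
        refine ⟨k0, ?_, ?_⟩
        · cases h : A i k0 with
          | none => simp [resolveD, h]
          | some b => cases b
                      · exact absurd h hk1
                      · simp [resolveD, h]
        · cases h : B k0 j with
          | none => simp [resolveD, h]
          | some b => cases b
                      · exact absurd h hk2
                      · simp [resolveD, h]
      · refine ⟨resolveD A false, resolveD_mem A false, resolveD B false, resolveD_mem B false, ?_⟩
        simp only [bmul, decide_eq_false_iff_not, not_exists, not_and]
        intro k hak hbk
        have hA : A i k = some true := by
          cases h : A i k with
          | none => simp [resolveD, h] at hak
          | some b => cases b
                      · simp [resolveD, h] at hak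
                      · rfl
        have hB : B k j = some true := by
          cases h : B k j with
          | none => simp [resolveD, h] at hbk
          | some b => cases b
                      · simp [resolveD, h] at hbk
                      · rfl
        exact h1 ⟨k, hA, hB⟩
end

section
/- For all α,β,γ ∈ ℕ and all matrices G ∈ 𝕋^{α×β} and F ∈ 𝕋^{β×γ}, it holds that G ·_u F = (G^{(0)} · F^{(0)}) * (G^{(1)} · F^{(1)}), where the products on the right are Boolean matrix products. -/
/-- The binary `*` operator on Kleene values: `a * b = a` if `a = b`, else `u`. -/
def starK (a b : Option Bool) : Option Bool := if a = b then a else none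

/-- `A^{(b)}`: replace every `u` entry of `A` by the stable value `b`. -/
def stab {α β : Type*} (A : α → β → Option Bool) (b : Bool) : α → β → Bool :=
  fun i j => (A i j).getD b

lemma stab_mem_resM {α β : Type*} (A : α → β → Option Bool) (b : Bool) :
    stab A b ∈ resM A := by
  intro i j c h; simp [stab, h]

lemma stab_false_le {α β : Type*} {A : α → β → Option Bool} {A' : α → β → Bool}
    (hA : A' ∈ resM A) (i : α) (j : β) (h : stab A false i j = true) : A' i j = true := by
  cases hc : A i j with
  | none => simp [stab, hc] at h
  | some c => have := hA i j c hc; simp [stab, hc] at h; rw [this, h]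

lemma le_stab_true {α β : Type*} {A : α → β → Option Bool} {A' : α → β → Bool}
    (hA : A' ∈ resM A) (i : α) (j : β) (h : A' i j = true) : stab A true i j = true := by
  cases hc : A i j with
  | none => simp [stab, hc]
  | some c => have := hA i j c hc; simp [stab, hc, ← this, h]

lemma bmul_mono {α β γ : Type*} [Fintype β] {A A' : α → β → Bool} {B B' : β → γ → Bool}
    (hA : ∀ i j, A i j = true → A' i j = true) (hB : ∀ j k, B j k = true → B' j k = true)
    (i : α) (k : γ) (h : bmul A B i k = true) : bmul A' B' i k = true := by
  simp only [bmul, decide_eq_true_iff] at *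
  obtain ⟨j, h1, h2⟩ := h
  exact ⟨j, hA i j h1, hB j k h2⟩

/-- `G ·_u F = (G^{(0)} · F^{(0)}) * (G^{(1)} · F^{(1)})`. -/
theorem kmul_eq_star_of_stab (α β γ : ℕ)
    (G : Fin α → Fin β → Option Bool) (F : Fin β → Fin γ → Option Bool) :
    kmul G F = fun i k =>
      starK (some (bmul (stab G false) (stab F false) i k))
            (some (bmul (stab G true) (stab F true) i k)) := by
  classical
  funext i k
  set p0 := bmul (stab G false) (stab F false) i k with hp0
  set p1 := bmul (stab G true) (stab F true) i k with hp1
  set S : Set Bool := {b | ∃ A' ∈ resM G, ∃ B' ∈ resM F, bmul A' B' i k = b} with hSdef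
  have hkm : kmul G F i k = starSet S := rfl
  have hmem0 : p0 ∈ S := ⟨stab G false, stab_mem_resM G false, stab F false, stab_mem_resM F false, rfl⟩
  have hmem1 : p1 ∈ S := ⟨stab G true, stab_mem_resM G true, stab F true, stab_mem_resM F true, rfl⟩
  have hub : ∀ b ∈ S, b = true → p1 = true := by
    rintro b ⟨A', hA, B', hB, rfl⟩ hb
    exact bmul_mono (fun i j => le_stab_true hA i j) (fun j k => le_stab_true hB j k) i k hb
  have hlb : ∀ b ∈ S, p0 = true → b = true := by
    rintro b ⟨A', hA, B', hB, rfl⟩ hb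
    exact bmul_mono (fun i j => stab_false_le hA i j) (fun j k => stab_false_le hB j k) i k hb
  rw [hkm]
  cases h0 : p0 <;> cases h1 : p1
  · -- p0 = false, p1 = false
    have ht : true ∉ S := fun h => by simpa [h1] using hub true h rfl
    have hf : false ∈ S := h0 ▸ hmem0
    simp [starSet, ht, hf, starK]
  · -- p0 = false, p1 = true
    have ht : true ∈ S := h1 ▸ hmem1
    have hf : false ∈ S := h0 ▸ hmem0
    simp [starSet, ht, hf, starK]
  · -- p0 = true, p1 = false
    exact absurd (hub p0 hmem0 h0) (by simp [h1])
  · -- p0 = true, p1 = true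
    have ht : true ∈ S := h1 ▸ hmem1
    have hf : false ∉ S := fun h => by simpa using hlb false h h0
    simp [starSet, ht, hf, starK]
end

section
/- Let n ≥ 1, let S_0, S_1, …, S_n be finite sets, and for each i ∈ [n] let ℓ_i ≥ 1 and E_i : B^{ℓ_i} → (S_i → S_{i+1}). Define E : ∏_{i∈[n]} B^{ℓ_i} → (S_0 → S_n) by E(x) = E_{n−1}(x_{n−1}) ∘ ⋯ ∘ E_1(x_1) ∘ E_0(x_0). Then for all x ∈ ∏_{i∈[n]} 𝕋^{ℓ_i}, the hazard-free extension of x ↦ M_{E(x)} satisfies (M_{E(·)})_u(x) = (M_{E_{n−1}(·)})_u(x_{n−1}) ·_u (M_{E_{n−2}(·)})_u(x_{n−2}) ·_u ⋯ ·_u (M_{E_0(·)})_u(x_0), where (M_{E_i(·)})_u denotes the hazard-free extension of y ↦ M_{E_i(y)}. -/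
/-- Universal encoding of a function between finite sets: the Boolean matrix with
rows indexed by subsets of the codomain and columns by subsets of the domain,
with a `1` at `(B, A)` iff `f(A) ⊆ B`. -/
def Menc {S T : Type*} [DecidableEq T] (f : S → T) (Bs : Finset T) (As : Finset S) : Bool :=
  decide (∀ a ∈ As, f a ∈ Bs)

/-- The composition `E_{m-1}(y_{m-1}) ∘ ⋯ ∘ E_0(y_0) : S 0 → S m`. -/
def compE (S : ℕ → Type) (l : ℕ → ℕ)
    (E : ∀ i : ℕ, (Fin (l i) → Bool) → S i → S (i + 1))
    (y : ∀ i : ℕ, Fin (l i) → Bool) : (m : ℕ) → S 0 → S m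
  | 0 => id
  | m + 1 => E m (y m) ∘ compE S l E y m

/-- The hazard-free extension of `y ↦ M_{E_i(y)}` applied to the `i`-th block of `x`. -/
noncomputable def stepMat (S : ℕ → Type) [∀ i, Fintype (S i)] [∀ i, DecidableEq (S i)]
    (l : ℕ → ℕ) (E : ∀ i : ℕ, (Fin (l i) → Bool) → S i → S (i + 1))
    (x : (Σ i : ℕ, Fin (l i)) → Option Bool) (i : ℕ) :
    Finset (S (i + 1)) → Finset (S i) → Option Bool :=
  fun Bs As =>
    hfExt (fun y (p : Finset (S (i + 1)) × Finset (S i)) => Menc (E i y) p.1 p.2)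
      (fun j => x ⟨i, j⟩) (Bs, As)

/-- The `·_u`-product `(M_{E_m(·)})_u(x_m) ·_u ⋯ ·_u (M_{E_0(·)})_u(x_0)`. -/
noncomputable def prodMat (S : ℕ → Type) [∀ i, Fintype (S i)] [∀ i, DecidableEq (S i)]
    (l : ℕ → ℕ) (E : ∀ i : ℕ, (Fin (l i) → Bool) → S i → S (i + 1))
    (x : (Σ i : ℕ, Fin (l i)) → Option Bool) :
    (m : ℕ) → Finset (S (m + 1)) → Finset (S 0) → Option Bool
  | 0 => stepMat S l E x 0
  | m + 1 => kmul (stepMat S l E x (m + 1)) (prodMat S l E x m)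


section Aux

/-! ### Lemmas about `starSet` -/

lemma starSet_eq_some_true {V : Set Bool} (h1 : true ∈ V) (h0 : false ∉ V) :
    starSet V = some true := by simp [starSet, h1, h0]

lemma starSet_eq_some_false {V : Set Bool} (h1 : true ∉ V) (h0 : false ∈ V) :
    starSet V = some false := by simp [starSet, h1, h0]

lemma eq_of_starSet_eq_some {V : Set Bool} {b : Bool} (h : starSet V = some b) :
    ∀ c ∈ V, c = b := by
  intro c hc
  by_cases hT : true ∈ V <;> by_cases hF : false ∈ V <;>
      simp only [starSet, hT, hF, if_true, if_false] at h <;>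
    cases c <;> simp_all

/-! ### Merged matrices of a family -/

/-- The coordinatewise merge of the family of matrices `m f`, for `f ∈ 𝒜`. -/
noncomputable def mergedM {α β F : Type*} (𝒜 : Set F) (m : F → α → β → Bool) :
    α → β → Option Bool :=
  fun i j => starSet {v | ∃ f ∈ 𝒜, m f i j = v}

lemma mem_resM_mergedM {α β F : Type*} {𝒜 : Set F} {m : F → α → β → Bool}
    {f : F} (hf : f ∈ 𝒜) : m f ∈ resM (mergedM 𝒜 m) := by
  intro i j b hb
  exact eq_of_starSet_eq_some hb (m f i j) ⟨f, hf, rfl⟩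

lemma exists_eq_of_resM {α β F : Type*} (𝒜 : Set F) (h : 𝒜.Nonempty)
    (m : F → α → β → Bool) (A' : α → β → Bool) (hA' : A' ∈ resM (mergedM 𝒜 m))
    (i : α) (j : β) : ∃ f ∈ 𝒜, m f i j = A' i j := by
  by_contra hcon
  push_neg at hcon
  obtain ⟨f0, hf0⟩ := h
  have hset : {v | ∃ f ∈ 𝒜, m f i j = v} = {!(A' i j)} := by
    ext v
    constructor
    · rintro ⟨f, hf, rfl⟩
      have := hcon f hf
      simp only [Set.mem_singleton_iff]
      cases hA : A' i j <;> cases hm : m f i j <;> simp_all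
    · rintro rfl
      refine ⟨f0, hf0, ?_⟩
      have := hcon f0 hf0
      cases hA : A' i j <;> cases hm : m f0 i j <;> simp_all
  have hval : mergedM 𝒜 m i j = some (!(A' i j)) := by
    unfold mergedM
    rw [hset]
    cases A' i j <;> simp [starSet]
  have := hA' i j _ hval
  cases h' : A' i j <;> rw [h'] at this <;> simp at this

/-! ### Universal encodings multiply -/

lemma Menc_eq_true_iff {S T : Type*} [DecidableEq T] {f : S → T}
    {Bs : Finset T} {As : Finset S} :
    Menc f Bs As = true ↔ ∀ a ∈ As, f a ∈ Bs := by simp [Menc]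

lemma Menc_eq_false_iff {S T : Type*} [DecidableEq T] {f : S → T}
    {Bs : Finset T} {As : Finset S} :
    Menc f Bs As = false ↔ ∃ a ∈ As, f a ∉ Bs := by simp [Menc]

lemma bmul_Menc {S0 S1 S2 : Type*} [Fintype S1] [DecidableEq S0] [DecidableEq S1]
    [DecidableEq S2] (f : S1 → S2) (g : S0 → S1) :
    bmul (Menc f) (Menc g) = Menc (f ∘ g) := by
  funext Bs As
  unfold bmul
  rw [show (Menc (f ∘ g) Bs As) = decide (∀ a ∈ As, f (g a) ∈ Bs) from rfl]
  rw [decide_eq_decide]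
  constructor
  · rintro ⟨Cs, h1, h2⟩
    rw [Menc_eq_true_iff] at h1 h2
    intro a ha
    exact h1 _ (h2 a ha)
  · intro h
    refine ⟨As.image g, ?_, ?_⟩
    · rw [Menc_eq_true_iff]
      intro c hc
      obtain ⟨a, ha, rfl⟩ := Finset.mem_image.mp hc
      exact h a ha
    · rw [Menc_eq_true_iff]
      intro a ha
      exact Finset.mem_image_of_mem g ha

/-! ### The key composition lemma for `kmul` of merged universal encodings -/

lemma kmul_mergedM_Menc {S0 S1 S2 : Type*} [Fintype S1] [DecidableEq S0]
    [DecidableEq S1] [DecidableEq S2]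
    (𝒜 : Set (S1 → S2)) (ℬ : Set (S0 → S1)) (h𝒜 : 𝒜.Nonempty) (hℬ : ℬ.Nonempty) :
    kmul (mergedM 𝒜 Menc) (mergedM ℬ Menc)
      = mergedM {h | ∃ f ∈ 𝒜, ∃ g ∈ ℬ, f ∘ g = h} Menc := by
  classical
  funext Bs As
  unfold kmul mergedM
  congr 1
  ext v
  constructor
  · rintro ⟨A', hA', B', hB', rfl⟩
    cases hb : bmul A' B' Bs As
    · -- value false
      set Cs0 : Finset S1 :=
        Finset.univ.filter (fun t => ∃ g ∈ ℬ, ∃ a ∈ As, g a = t) with hCs0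
      have hBtrue : ∀ g ∈ ℬ, Menc g Cs0 As = true := by
        intro g hg
        rw [Menc_eq_true_iff]
        intro a ha
        simp only [hCs0, Finset.mem_filter, Finset.mem_univ, true_and]
        exact ⟨g, hg, a, ha, rfl⟩
      have hBval : mergedM ℬ Menc Cs0 As = some true := by
        obtain ⟨g0, hg0⟩ := hℬ
        apply starSet_eq_some_true
        · exact ⟨g0, hg0, hBtrue g0 hg0⟩
        · rintro ⟨g, hg, hgv⟩
          rw [hBtrue g hg] at hgv
          exact Bool.true_eq_false.mp hgv
      have hB'true : B' Cs0 As = true := hB' Cs0 As true hBval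
      have hA'false : A' Bs Cs0 = false := by
        by_contra hA
        have hA : A' Bs Cs0 = true := by
          cases h' : A' Bs Cs0
          · exact absurd h' hA
          · rfl
        have : bmul A' B' Bs As = true := by
          unfold bmul
          simp only [decide_eq_true_eq]
          exact ⟨Cs0, hA, hB'true⟩
        rw [hb] at this
        exact Bool.false_eq_true.mp this
      obtain ⟨f, hf, hfval⟩ := exists_eq_of_resM 𝒜 h𝒜 _ A' hA' Bs Cs0
      rw [hA'false] at hfval
      rw [Menc_eq_false_iff] at hfval
      obtain ⟨c, hc, hfc⟩ := hfval
      simp only [hCs0, Finset.mem_filter, Finset.mem_univ, true_and] at hc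
      obtain ⟨g, hg, a, ha, rfl⟩ := hc
      refine ⟨f ∘ g, ⟨f, hf, g, hg, rfl⟩, ?_⟩
      rw [Menc_eq_false_iff]
      exact ⟨a, ha, hfc⟩
    · -- value true
      have : ∃ Cs, A' Bs Cs = true ∧ B' Cs As = true := by
        have := hb
        unfold bmul at this
        simpa using this
      obtain ⟨Cs, hA, hB⟩ := this
      obtain ⟨f, hf, hfval⟩ := exists_eq_of_resM 𝒜 h𝒜 _ A' hA' Bs Cs
      obtain ⟨g, hg, hgval⟩ := exists_eq_of_resM ℬ hℬ _ B' hB' Cs As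
      rw [hA] at hfval
      rw [hB] at hgval
      refine ⟨f ∘ g, ⟨f, hf, g, hg, rfl⟩, ?_⟩
      rw [Menc_eq_true_iff]
      intro a ha
      exact Menc_eq_true_iff.mp hfval _ (Menc_eq_true_iff.mp hgval a ha)
  · rintro ⟨h, ⟨f, hf, g, hg, rfl⟩, rfl⟩
    exact ⟨Menc f, mem_resM_mergedM hf, Menc g, mem_resM_mergedM hg,
      by rw [bmul_Menc]⟩

/-! ### Overrides of resolutions and `compE` congruence -/

/-- Override a full resolution on block `i0` by `a`. -/
def ovr (l : ℕ → ℕ) (y : (Σ i : ℕ, Fin (l i)) → Bool) (i0 : ℕ)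
    (a : Fin (l i0) → Bool) : (Σ i : ℕ, Fin (l i)) → Bool :=
  fun p => if h : p.1 = i0 then a (h ▸ p.2) else y p

lemma ovr_blk (l : ℕ → ℕ) (y : (Σ i : ℕ, Fin (l i)) → Bool) (i0 : ℕ)
    (a : Fin (l i0) → Bool) : (fun j => ovr l y i0 a ⟨i0, j⟩) = a := by
  funext j
  simp [ovr]

lemma ovr_blk_ne (l : ℕ → ℕ) (y : (Σ i : ℕ, Fin (l i)) → Bool) (i0 : ℕ)
    (a : Fin (l i0) → Bool) {i : ℕ} (h : i ≠ i0) :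
    (fun j => ovr l y i0 a ⟨i, j⟩) = fun j => y ⟨i, j⟩ := by
  funext j
  simp [ovr, h]

lemma ovr_mem_res (l : ℕ → ℕ) {x : (Σ i : ℕ, Fin (l i)) → Option Bool}
    {y : (Σ i : ℕ, Fin (l i)) → Bool} (hy : y ∈ res x) {i0 : ℕ}
    {a : Fin (l i0) → Bool} (ha : a ∈ res (fun j => x ⟨i0, j⟩)) :
    ovr l y i0 a ∈ res x := by
  rintro ⟨i, j⟩ b hb
  by_cases h : i = i0
  · subst h
    simpa [ovr] using ha j b hb
  · simpa [ovr, h] using hy ⟨i, j⟩ b hb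

lemma res_nonempty {ι : Type*} (x : ι → Option Bool) : (res x).Nonempty := by
  refine ⟨fun i => (x i).getD false, fun i b hb => ?_⟩
  show (x i).getD false = b
  rw [hb]
  rfl

lemma compE_congr (S : ℕ → Type) (l : ℕ → ℕ)
    (E : ∀ i : ℕ, (Fin (l i) → Bool) → S i → S (i + 1))
    (y y' : ∀ i : ℕ, Fin (l i) → Bool) (k : ℕ) (h : ∀ i < k, y i = y' i) :
    compE S l E y k = compE S l E y' k := by
  induction k with
  | zero => rfl
  | succ m ih =>
    show E m (y m) ∘ compE S l E y m = E m (y' m) ∘ compE S l E y' m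
    rw [h m (Nat.lt_succ_self m), ih (fun i hi => h i (hi.trans (Nat.lt_succ_self m)))]

/-! ### `stepMat` as the merged matrix of a family -/

lemma stepMat_eq (S : ℕ → Type) [∀ i, Fintype (S i)] [∀ i, DecidableEq (S i)]
    (l : ℕ → ℕ) (E : ∀ i : ℕ, (Fin (l i) → Bool) → S i → S (i + 1))
    (x : (Σ i : ℕ, Fin (l i)) → Option Bool) (i : ℕ) :
    stepMat S l E x i
      = mergedM {f | ∃ a ∈ res (fun j => x ⟨i, j⟩), E i a = f} Menc := by
  funext Bs As
  unfold stepMat hfExt mergedM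
  congr 1
  ext v
  constructor
  · rintro ⟨a, ha, rfl⟩
    exact ⟨E i a, ⟨a, ha, rfl⟩, rfl⟩
  · rintro ⟨f, ⟨a, ha, rfl⟩, rfl⟩
    exact ⟨a, ha, rfl⟩

lemma mergedM_congr {α β F : Type*} {𝒜 ℬ : Set F} (m : F → α → β → Bool)
    (h : 𝒜 = ℬ) : mergedM 𝒜 m = mergedM ℬ m := by rw [h]

end Aux

/-- with `n = m + 1 ≥ 1`: the hazard-free extension of
`x ↦ M_{E(x)}`, where `E(x) = E_{n-1}(x_{n-1}) ∘ ⋯ ∘ E_0(x_0)`, equals the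
`·_u`-product of the hazard-free extensions `(M_{E_i(·)})_u(x_i)`. -/
theorem hfExt_Menc_comp (S : ℕ → Type) [∀ i, Fintype (S i)] [∀ i, DecidableEq (S i)]
    (l : ℕ → ℕ) (hl : ∀ i, 1 ≤ l i)
    (E : ∀ i : ℕ, (Fin (l i) → Bool) → S i → S (i + 1))
    (m : ℕ) (x : (Σ i : ℕ, Fin (l i)) → Option Bool) :
    hfExt (fun (y : (Σ i : ℕ, Fin (l i)) → Bool)
        (p : Finset (S (m + 1)) × Finset (S 0)) =>
        Menc (compE S l E (fun i j => y ⟨i, j⟩) (m + 1)) p.1 p.2) x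
      = fun p => prodMat S l E x m p.1 p.2 := by
    classical
  have key : ∀ m : ℕ, prodMat S l E x m
      = mergedM {g | ∃ y ∈ res x, compE S l E (fun i j => y ⟨i, j⟩) (m + 1) = g}
          Menc := by
    intro m
    induction m with
    | zero =>
      show stepMat S l E x 0 = _
      rw [stepMat_eq]
      apply mergedM_congr
      ext g
      constructor
      · rintro ⟨a, ha, rfl⟩
        obtain ⟨y0, hy0⟩ := res_nonempty x
        refine ⟨ovr l y0 0 a, ovr_mem_res l hy0 ha, ?_⟩
        show E 0 (fun j => ovr l y0 0 a ⟨0, j⟩) ∘ id = E 0 a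
        rw [ovr_blk, Function.comp_id]
      · rintro ⟨y, hy, rfl⟩
        refine ⟨fun j => y ⟨0, j⟩, fun j b hb => hy ⟨0, j⟩ b hb, ?_⟩
        show E 0 _ = E 0 (fun j => y ⟨0, j⟩) ∘ id
        rw [Function.comp_id]
    | succ m ih =>
      show kmul (stepMat S l E x (m + 1)) (prodMat S l E x m) = _
      rw [stepMat_eq, ih, kmul_mergedM_Menc]
      · apply mergedM_congr
        ext g
        constructor
        · rintro ⟨f, ⟨a, ha, rfl⟩, g', ⟨y, hy, rfl⟩, rfl⟩
          refine ⟨ovr l y (m + 1) a, ovr_mem_res l hy ha, ?_⟩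
          show E (m + 1) (fun j => ovr l y (m + 1) a ⟨m + 1, j⟩)
              ∘ compE S l E (fun i j => ovr l y (m + 1) a ⟨i, j⟩) (m + 1)
            = E (m + 1) a ∘ compE S l E (fun i j => y ⟨i, j⟩) (m + 1)
          rw [ovr_blk, compE_congr S l E (fun i j => ovr l y (m + 1) a ⟨i, j⟩)
            (fun i j => y ⟨i, j⟩) (m + 1)
            (fun i hi => ovr_blk_ne l y (m + 1) a (Nat.ne_of_lt hi))]
        · rintro ⟨y, hy, rfl⟩
          refine ⟨E (m + 1) (fun j => y ⟨m + 1, j⟩),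
            ⟨fun j => y ⟨m + 1, j⟩, fun j b hb => hy ⟨m + 1, j⟩ b hb, rfl⟩,
            compE S l E (fun i j => y ⟨i, j⟩) (m + 1), ⟨y, hy, rfl⟩, rfl⟩
      · obtain ⟨a, ha⟩ := res_nonempty (fun j => x ⟨m + 1, j⟩)
        exact ⟨E (m + 1) a, a, ha, rfl⟩
      · obtain ⟨y, hy⟩ := res_nonempty x
        exact ⟨compE S l E (fun i j => y ⟨i, j⟩) (m + 1), y, hy, rfl⟩
  rw [key]
  funext p
  show starSet _ = starSet _
  apply congrArg
  ext v
  constructor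
  · rintro ⟨y, hy, rfl⟩
    exact ⟨compE S l E (fun i j => y ⟨i, j⟩) (m + 1), ⟨y, hy, rfl⟩, rfl⟩
  · rintro ⟨g, ⟨y, hy, rfl⟩, rfl⟩
    exact ⟨y, hy, rfl⟩
end

section
/- Let γ : [M] → B^n be a k-recoverable code and let γ^{-1} : B^n → [M] be an extension of its decoding function witnessing k-recoverability. Then for every function f : [M] → B^m, every p ≤ k, and every p-imprecise extended codeword x, the hazard-free extension of f ∘ γ^{-1} satisfies (f ∘ γ^{-1})_u(x) = *_{i ∈ r_x} f(i). -/
/-- The extended codeword `*_{j ∈ ⟨i,i+p⟩_M} γ(j mod M)` of the range of the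
`p+1` consecutive residues modulo `M` starting at `i`. -/
noncomputable def extCW {n : ℕ} (γ : ℕ → Fin n → Bool) (M i p : ℕ) : Fin n → Option Bool :=
  fun t => starSet {b | ∃ j ≤ p, γ ((i + j) % M) t = b}

/-- `dec` witnesses `k`-recoverability of the code `γ : [M] → B^n`: it extends the
decoding function and maps every resolution of an extended codeword of imprecision
at most `k` into its range. -/
def RecovWitness {n : ℕ} (γ : ℕ → Fin n → Bool) (M k : ℕ)
    (dec : (Fin n → Bool) → ℕ) : Prop :=
  (∀ y, dec y < M) ∧
    ∀ i < M, ∀ p ≤ k, ∀ y ∈ res (extCW γ M i p), ∃ j ≤ p, dec y = (i + j) % M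

lemma starSet_mem {S : Set Bool} {b c : Bool} (h : starSet S = some b) (hc : c ∈ S) :
    c = b := by
  unfold starSet at h
  split_ifs at h with h1 h2 h3 <;> cases c <;> cases b <;> simp_all

/-- for a `k`-recoverable code `γ` with witnessing extension `dec` of
the decoding function, for every `f : [M] → B^m` the hazard-free extension of
`f ∘ γ^{-1}` maps every `p`-imprecise extended codeword (`p ≤ k`) to `*_{i ∈ r_x} f(i)`. -/
theorem hfExt_comp_dec (n m M k : ℕ) (γ : ℕ → Fin n → Bool)
    (hinj : Set.InjOn γ (Set.Iio M))
    (dec : (Fin n → Bool) → ℕ) (hdec : RecovWitness γ M k dec)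
    (f : ℕ → Fin m → Bool) (i : ℕ) (hi : i < M) (p : ℕ) (hp : p ≤ k) :
    hfExt (fun y => f (dec y)) (extCW γ M i p)
      = fun t => starSet {b | ∃ j ≤ p, f ((i + j) % M) t = b} := by
  obtain ⟨hlt, hwit⟩ := hdec
  have hM : 0 < M := lt_of_le_of_lt (Nat.zero_le i) hi
  funext t
  unfold hfExt
  congr 1
  ext b
  simp only [Set.mem_setOf_eq]
  constructor
  · rintro ⟨y, hy, rfl⟩
    obtain ⟨j, hj, hdy⟩ := hwit i hi p hp y hy
    exact ⟨j, hj, by rw [hdy]⟩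
  · rintro ⟨j, hj, rfl⟩
    have hcM : (i + j) % M < M := Nat.mod_lt _ hM
    refine ⟨γ ((i + j) % M), ?_, ?_⟩
    · intro t' b' hb'
      have hmem : γ ((i + j) % M) t' ∈ {b | ∃ j' ≤ p, γ ((i + j') % M) t' = b} :=
        ⟨j, hj, rfl⟩
      exact starSet_mem hb' hmem
    · have h0 : γ ((i + j) % M) ∈ res (extCW γ M ((i + j) % M) 0) := by
        intro t' b' hb'
        have hmem : γ ((i + j) % M) t' ∈
            {b | ∃ j' ≤ 0, γ (((i + j) % M + j') % M) t' = b} :=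
          ⟨0, le_refl 0, by simp [Nat.mod_eq_of_lt hcM]⟩
        exact starSet_mem hb' hmem
      obtain ⟨j0, hj0, hd⟩ := hwit _ hcM 0 (Nat.zero_le k) _ h0
      interval_cases j0
      rw [hd]
      simp [Nat.mod_eq_of_lt hcM]
end

section
/- Let γ : [M] → B^n be a k-recoverable code with γ^{-1} : B^n → [M] an extension of its decoding function witnessing k-recoverability, and define +_γ : B^n × B^n → B^n by a +_γ b = γ((γ^{-1}(a) + γ^{-1}(b)) mod M). Then for all extended codewords x and y with p_x + p_y ≤ k, the hazard-free extension of +_γ satisfies (+_γ)_u(x, y) = *_{ℓ ∈ (r_x + r_y) mod M} γ(ℓ), where (r_x + r_y) mod M = {(i+j) mod M : i ∈ r_x, j ∈ r_y}. -/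
/-- Hazard-free extension of a two-argument Boolean function. -/
noncomputable def hfExt2 {n m : ℕ} (f : (Fin n → Bool) → (Fin n → Bool) → Fin m → Bool)
    (x y : Fin n → Option Bool) : Fin m → Option Bool :=
  fun t => starSet {b | ∃ x' ∈ res x, ∃ y' ∈ res y, f x' y' t = b}

lemma starSet_eq_some {S : Set Bool} {b : Bool} (h : starSet S = some b) :
    ∀ c ∈ S, c = b := by
  classical
  intro c hc
  unfold starSet at h
  by_cases ht : true ∈ S <;> by_cases hf : false ∈ S <;>
    simp [ht, hf] at h <;> cases c <;> simp_all

lemma gamma_mem_res {n : ℕ} (γ : ℕ → Fin n → Bool) (M i p : ℕ)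
    {j : ℕ} (hj : j ≤ p) : γ ((i + j) % M) ∈ res (extCW γ M i p) := by
  intro t b h
  exact starSet_eq_some h _ ⟨j, hj, rfl⟩

lemma dec_gamma {n M k : ℕ} {γ : ℕ → Fin n → Bool} {dec : (Fin n → Bool) → ℕ}
    (hdec : RecovWitness γ M k dec) {i : ℕ} (hi : i < M) : dec (γ i) = i := by
  have hmem : γ ((i + 0) % M) ∈ res (extCW γ M i 0) := gamma_mem_res γ M i 0 le_rfl
  rw [Nat.add_zero, Nat.mod_eq_of_lt hi] at hmem
  obtain ⟨j, hj, h⟩ := hdec.2 i hi 0 (Nat.zero_le k) _ hmem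
  interval_cases j
  rw [h, Nat.add_zero, Nat.mod_eq_of_lt hi]

/-- for a `k`-recoverable code `γ` with witnessing extension `dec`,
the hazard-free extension of `a +_γ b = γ((γ^{-1}(a) + γ^{-1}(b)) mod M)` maps
extended codewords `x, y` with `p_x + p_y ≤ k` to `*_{ℓ ∈ (r_x + r_y) mod M} γ(ℓ)`. -/
theorem hfExt2_add (n M k : ℕ) (γ : ℕ → Fin n → Bool)
    (hinj : Set.InjOn γ (Set.Iio M))
    (dec : (Fin n → Bool) → ℕ) (hdec : RecovWitness γ M k dec)
    (i₁ i₂ : ℕ) (h₁ : i₁ < M) (h₂ : i₂ < M)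
    (p₁ p₂ : ℕ) (hp : p₁ + p₂ ≤ k) :
    hfExt2 (fun a b => γ ((dec a + dec b) % M)) (extCW γ M i₁ p₁) (extCW γ M i₂ p₂)
      = fun t => starSet {b | ∃ j₁ ≤ p₁, ∃ j₂ ≤ p₂, γ ((i₁ + j₁ + (i₂ + j₂)) % M) t = b} := by
  funext t
  unfold hfExt2
  congr 1
  ext b
  simp only [Set.mem_setOf_eq]
  constructor
  · rintro ⟨x', hx', y', hy', rfl⟩
    obtain ⟨j₁, hj₁, e₁⟩ := hdec.2 i₁ h₁ p₁ (le_trans (Nat.le_add_right _ _) hp) _ hx'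
    obtain ⟨j₂, hj₂, e₂⟩ := hdec.2 i₂ h₂ p₂ (le_trans (Nat.le_add_left _ _) hp) _ hy'
    exact ⟨j₁, hj₁, j₂, hj₂, by rw [e₁, e₂, ← Nat.add_mod]⟩
  · rintro ⟨j₁, hj₁, j₂, hj₂, rfl⟩
    refine ⟨γ ((i₁ + j₁) % M), gamma_mem_res γ M i₁ p₁ hj₁,
      γ ((i₂ + j₂) % M), gamma_mem_res γ M i₂ p₂ hj₂, ?_⟩
    rw [dec_gamma hdec (Nat.mod_lt _ (by omega)),
      dec_gamma hdec (Nat.mod_lt _ (by omega)), ← Nat.add_mod]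
end

section
/- Let n ≥ 2, i, j ∈ [2^n], c ∈ {0,1}, and set x = rg_n(i), y = rg_n(j), with x' and y' the (n−1)-bit prefixes of x and y. Let b = 1 if par(x) + par(y) + c ≥ 2 (as an integer sum) and b = 0 otherwise. Then rg_n((i+j+c) mod 2^n) has (n−1)-bit prefix rg_{n−1}((rg_{n−1}^{-1}(x') + rg_{n−1}^{-1}(y') + b) mod 2^{n−1}), and its last bit equals x_n ⊕ y_n ⊕ b ⊕ c. -/
/-!
Unwinding the recursion, the last bit of `rg (n + 1) x` is the xor of the two lowest binary
digits of `x`, its `n`-bit prefix is `rg n (x / 2)`, and its parity is the lowest digit of `x`.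
So the prefix of `rg (m + 1) (i + j + c)` encodes `(i + j + c) / 2 = i / 2 + j / 2 + b`, where
`b` is the carry out of the lowest digit, and the last bit is the xor of the two lowest digits
of the sum, i.e. of the corresponding digits of `i`, `j`, `c` and of the carry `b`.
-/

instance : Std.Commutative xor := ⟨by decide⟩
instance : Std.Associative xor := ⟨by decide⟩

/-- The parity (xor of all bits) of a bit string. -/
def par {m : ℕ} (z : Fin m → Bool) : Bool := Finset.univ.fold xor false z

/-- The `n`-bit binary reflected Gray code (first bit is the reflection bit). -/
def rg : (n : ℕ) → ℕ → Fin n → Bool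
  | 0, _ => Fin.elim0
  | n + 1, x =>
      Fin.cons (decide (2 ^ n ≤ x)) (rg n (if x < 2 ^ n then x else 2 ^ (n + 1) - 1 - x))

/-- The decoding function of the binary reflected Gray code (`rg n` is a bijection
from `[2^n]` onto `B^n`, and `rgInv n` picks the unique preimage below `2^n`). -/
noncomputable def rgInv (n : ℕ) (x : Fin n → Bool) : ℕ :=
  sInf {a : ℕ | a < 2 ^ n ∧ rg n a = x}

open Nat (bodd)

theorem Nat.bodd_eq_bodd_iff {a b : ℕ} : bodd a = bodd b ↔ a % 2 = b % 2 := by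
  rw [mod_two_of_bodd a, mod_two_of_bodd b]
  cases bodd a <;> cases bodd b <;> simp

theorem Nat.bodd_two_pow_sub_one_sub {n x : ℕ} (hn : n ≠ 0) (hx : x < 2 ^ n) :
    bodd (2 ^ n - 1 - x) = !bodd x := by
  have h2 : 2 ^ n % 2 = 0 := Nat.mod_eq_zero_of_dvd (dvd_pow_self 2 hn)
  rw [← bodd_succ, bodd_eq_bodd_iff]
  omega

theorem Nat.bodd_toNat (b : Bool) : bodd b.toNat = b := by
  cases b <;> rfl

theorem Nat.bodd_mod_two_pow {m : ℕ} (x : ℕ) (hm : m ≠ 0) : bodd (x % 2 ^ m) = bodd x := by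
  rw [bodd_eq_bodd_iff]
  exact Nat.mod_mod_of_dvd x (dvd_pow_self 2 hm)

theorem Nat.add_add_toNat_div_two (a b : ℕ) (c : Bool) :
    (a + b + c.toNat) / 2
      = a / 2 + b / 2 + (decide (2 ≤ (bodd a).toNat + (bodd b).toNat + c.toNat)).toNat := by
  rw [← mod_two_of_bodd, ← mod_two_of_bodd]
  have := c.toNat_le
  by_cases h : 2 ≤ a % 2 + b % 2 + c.toNat <;> simp [h] <;> omega

theorem Fin.init_cons {n : ℕ} {β : Sort*} (a : β) (v : Fin (n + 1) → β) :
    Fin.init (Fin.cons a v : Fin (n + 2) → β) = Fin.cons a (Fin.init v) := by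
  ext i
  refine Fin.cases rfl (fun k => ?_) i
  simp [Fin.init]

theorem par_cons {n : ℕ} (a : Bool) (v : Fin n → Bool) :
    par (Fin.cons a v : Fin (n + 1) → Bool) = xor a (par v) := by
  simp [par, Fin.univ_succ, Finset.fold_map]

theorem rg_succ (n x : ℕ) :
    rg (n + 1) x
      = Fin.cons (decide (2 ^ n ≤ x)) (rg n (if x < 2 ^ n then x else 2 ^ (n + 1) - 1 - x)) :=
  rfl

theorem par_rg {n x : ℕ} (hx : x < 2 ^ n) : par (rg n x) = bodd x := by
  induction n generalizing x with
  | zero =>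
    obtain rfl : x = 0 := by simpa using hx
    rfl
  | succ n ih =>
    rw [rg_succ, par_cons]
    split_ifs with h
    · simp [ih h, Nat.not_le.mpr h]
    · rw [ih (by omega), Nat.bodd_two_pow_sub_one_sub n.succ_ne_zero hx]
      simp [show 2 ^ n ≤ x by omega]

theorem init_rg {n x : ℕ} (hx : x < 2 ^ (n + 1)) : Fin.init (rg (n + 1) x) = rg n (x / 2) := by
  induction n generalizing x with
  | zero => exact funext fun i => i.elim0
  | succ n ih =>
    have h2 : 2 ^ (n + 1) = 2 * 2 ^ n := pow_succ' 2 n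
    rw [rg_succ (n + 1), Fin.init_cons, rg_succ n (x / 2)]
    congr 1
    · simp only [decide_eq_decide]
      omega
    · split_ifs with h h'
      · exact ih h
      · omega
      · omega
      · rw [ih (by omega)]
        congr 1
        omega

theorem rg_succ_last {n x : ℕ} (hx : x < 2 ^ (n + 1)) :
    rg (n + 1) x (Fin.last n) = xor (bodd x) (bodd (x / 2)) := by
  induction n generalizing x with
  | zero => interval_cases x <;> rfl
  | succ n ih =>
    rw [rg_succ (n + 1), Fin.cons_last]
    split_ifs with h
    · exact ih h
    · have h2 : 2 ^ (n + 2) = 2 * 2 ^ (n + 1) := pow_succ' 2 (n + 1)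
      rw [ih (by omega), show (2 ^ (n + 2) - 1 - x) / 2 = 2 ^ (n + 1) - 1 - x / 2 by omega,
        Nat.bodd_two_pow_sub_one_sub (by omega) hx,
        Nat.bodd_two_pow_sub_one_sub (by omega) (by omega)]
      simp

theorem rg_injOn (n : ℕ) : Set.InjOn (rg n) (Set.Iio (2 ^ n)) := by
  induction n with
  | zero =>
    intro a ha b hb _
    simp_all
  | succ n ih =>
    intro a ha b hb hab
    have hdiv : a / 2 = b / 2 :=
      ih (by simp at ha ⊢; omega) (by simp at hb ⊢; omega)
        (by rw [← init_rg ha, ← init_rg hb, hab])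
    have hbodd : bodd a = bodd b := by
      simpa [rg_succ_last ha, rg_succ_last hb, hdiv] using congrFun hab (Fin.last n)
    rw [Nat.bodd_eq_bodd_iff] at hbodd
    omega

theorem rgInv_rg {n x : ℕ} (hx : x < 2 ^ n) : rgInv n (rg n x) = x := by
  have hpre : {a | a < 2 ^ n ∧ rg n a = rg n x} = {x} :=
    Set.ext fun a => ⟨fun ⟨ha, h⟩ => rg_injOn n ha hx h, by rintro rfl; exact ⟨hx, rfl⟩⟩
  rw [rgInv, hpre, csInf_singleton]

/-- with `n = m + 1 ≥ 2`: addition of reflected Gray code strings.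
With `x = rg_n(i)`, `y = rg_n(j)`, carry-in `c`, and
`b = 1` iff `par(x) + par(y) + c ≥ 2` (integer sum), the `(n-1)`-bit prefix of
`rg_n(i+j+c)` is `rg_{n-1}(rg_{n-1}^{-1}(x') + rg_{n-1}^{-1}(y') + b)` and its last
bit is `x_n ⊕ y_n ⊕ b ⊕ c`. -/
theorem rg_add (m : ℕ) (hm : 1 ≤ m) (i j : ℕ)
    (hi : i < 2 ^ (m + 1)) (hj : j < 2 ^ (m + 1)) (c : Bool) :
    Fin.init (rg (m + 1) ((i + j + c.toNat) % 2 ^ (m + 1)))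
      = rg m ((rgInv m (Fin.init (rg (m + 1) i)) + rgInv m (Fin.init (rg (m + 1) j)) +
          (decide
            (2 ≤ (par (rg (m + 1) i)).toNat + (par (rg (m + 1) j)).toNat + c.toNat)).toNat)
          % 2 ^ m)
    ∧ rg (m + 1) ((i + j + c.toNat) % 2 ^ (m + 1)) (Fin.last m)
      = xor (rg (m + 1) i (Fin.last m))
          (xor (rg (m + 1) j (Fin.last m))
            (xor
              (decide
                (2 ≤ (par (rg (m + 1) i)).toNat + (par (rg (m + 1) j)).toNat + c.toNat))
              c)) := by
  have hs : (i + j + c.toNat) % 2 ^ (m + 1) < 2 ^ (m + 1) := Nat.mod_lt _ (by positivity)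
  rw [par_rg hi, par_rg hj, init_rg hi, init_rg hj, rgInv_rg (by omega), rgInv_rg (by omega),
    init_rg hs, rg_succ_last hs, rg_succ_last hi, rg_succ_last hj]
  set b := decide (2 ≤ (bodd i).toNat + (bodd j).toNat + c.toNat)
  have hhalf : (i + j + c.toNat) % 2 ^ (m + 1) / 2 = (i / 2 + j / 2 + b.toNat) % 2 ^ m := by
    rw [pow_succ', Nat.mod_mul_right_div_self, Nat.add_add_toNat_div_two]
  refine ⟨by rw [hhalf], ?_⟩
  rw [hhalf, Nat.bodd_mod_two_pow _ (by omega), Nat.bodd_mod_two_pow _ (by omega)]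
  simp only [Nat.bodd_add, Nat.bodd_toNat]
  ac_rfl
end
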